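/- arXiv:2101.05911 — 7 statements merged into one kernel-verified Lean document; each statement's English description precedes it below -/
import Mathlib

section
/- For all nonnegative reals a_1,…,a_n, (∑ a_i²)² − ∑ a_i⁴ ≤ (1/8)·(∑ a_i)⁴. -/
/-!
Write `S = ∑ aᵢ` and `Q = ∑ aᵢ²`. Expanding squares, `Q² - ∑ aᵢ⁴ = ∑_{i ≠ j} aᵢ² aⱼ²` and
`S² - Q = ∑_{i ≠ j} aᵢ aⱼ`. For `i ≠ j`, `aᵢ aⱼ ≤ (aᵢ² + aⱼ²) / 2 ≤ Q / 2`, so each term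
`aᵢ² aⱼ² = (aᵢ aⱼ)²` is at most `(Q / 2) aᵢ aⱼ`. Hence the left side is at most
`Q (S² - Q) / 2 ≤ S⁴ / 8`, the last step being AM-GM for `Q` and `S² - Q`.
-/

open Finset

theorem Finset.sq_sum_eq_sum_sq_add_sum_offDiag {ι R : Type*} [DecidableEq ι] [CommSemiring R]
    (s : Finset ι) (f : ι → R) :
    (∑ i ∈ s, f i) ^ 2 = ∑ i ∈ s, f i ^ 2 + ∑ p ∈ s.offDiag, f p.1 * f p.2 := by
  rw [sq, sum_mul_sum, ← sum_product', ← diag_union_offDiag,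
    sum_union (disjoint_diag_offDiag _), sum_diag]
  simp only [sq]

theorem Finset.mul_le_half_sum_sq_of_ne {ι : Type*} (s : Finset ι) (f : ι → ℝ) {i j : ι}
    (hi : i ∈ s) (hj : j ∈ s) (hij : i ≠ j) :
    f i * f j ≤ (∑ k ∈ s, f k ^ 2) / 2 := by
  have hpair : f i ^ 2 + f j ^ 2 ≤ ∑ k ∈ s, f k ^ 2 := by
    classical
    rw [← sum_pair (f := fun k => f k ^ 2) hij]
    exact sum_le_sum_of_subset_of_nonneg (insert_subset hi (singleton_subset_iff.2 hj))
      fun k _ _ => sq_nonneg (f k)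
  linarith [two_mul_le_add_sq (f i) (f j)]

theorem Finset.sq_sum_sq_sub_sum_pow_four_le {ι : Type*} (s : Finset ι) (a : ι → ℝ)
    (ha : ∀ i ∈ s, 0 ≤ a i) :
    (∑ i ∈ s, a i ^ 2) ^ 2 - ∑ i ∈ s, a i ^ 4 ≤ 1 / 8 * (∑ i ∈ s, a i) ^ 4 := by
  classical
  set S := ∑ i ∈ s, a i
  set Q := ∑ i ∈ s, a i ^ 2
  have hQ : Q ^ 2 - ∑ i ∈ s, a i ^ 4 = ∑ p ∈ s.offDiag, a p.1 ^ 2 * a p.2 ^ 2 := by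
    rw [sq_sum_eq_sum_sq_add_sum_offDiag]
    simp only [← pow_mul]
    ring
  have hS : S ^ 2 - Q = ∑ p ∈ s.offDiag, a p.1 * a p.2 := by
    rw [sq_sum_eq_sum_sq_add_sum_offDiag]
    ring
  have hterm : ∀ p ∈ s.offDiag, a p.1 ^ 2 * a p.2 ^ 2 ≤ Q / 2 * (a p.1 * a p.2) := by
    intro p hp
    obtain ⟨h1, h2, hne⟩ := mem_offDiag.1 hp
    rw [← mul_pow, sq, mul_comm (Q / 2)]
    exact mul_le_mul_of_nonneg_left (mul_le_half_sum_sq_of_ne s a h1 h2 hne)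
      (mul_nonneg (ha _ h1) (ha _ h2))
  calc Q ^ 2 - ∑ i ∈ s, a i ^ 4
      ≤ ∑ p ∈ s.offDiag, Q / 2 * (a p.1 * a p.2) := hQ ▸ sum_le_sum hterm
    _ = Q * (S ^ 2 - Q) / 2 := by rw [← mul_sum, ← hS]; ring
    _ ≤ 1 / 8 * S ^ 4 := by linarith [four_mul_le_sq_add Q (S ^ 2 - Q)]

theorem stmt_0 (n : ℕ) (a : Fin n → ℝ) (ha : ∀ i, 0 ≤ a i) :
    (∑ i, (a i) ^ 2) ^ 2 - ∑ i, (a i) ^ 4 ≤ (1 / 8) * (∑ i, a i) ^ 4 :=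
  sq_sum_sq_sub_sum_pow_four_le univ a fun i _ => ha i
end

section
/- For all nonnegative reals a_1,…,a_n and b_1,…,b_n, (∑ a_i b_i)² − ∑ a_i² b_i² ≤ (1/8)·(∑ a_i)²·(∑ b_i)². -/
/-!
Write `x i = a i * b i`, `A = ∑ a`, `B = ∑ b`. The left-hand side is `∑_{i ≠ j} x i * x j`.
The weights `s i = B * a i + A * b i` are nonnegative, sum to `2 A B`, and satisfy
`4 A B * x i ≤ s i ^ 2` by AM-GM, so `16 (A B)² ∑_{i ≠ j} x i x j ≤ ∑_{i ≠ j} s i² s j²`.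
For nonnegative `y` with `∑ y = S` and `∑ y² = q`, every off-diagonal product satisfies
`y i * y j ≤ q / 2`, whence `∑_{i ≠ j} y i² y j² ≤ q (S² - q) / 2 ≤ S⁴ / 8`.
-/

open Finset

variable {ι R : Type*}

theorem Finset.sum_mul_le_sum_mul_sum [CommRing R] [LinearOrder R] [IsStrictOrderedRing R]
    {s : Finset ι} {a b : ι → R} (ha : ∀ i ∈ s, 0 ≤ a i)
    (hb : ∀ i ∈ s, 0 ≤ b i) : ∑ i ∈ s, a i * b i ≤ (∑ i ∈ s, a i) * ∑ i ∈ s, b i := by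
  rw [sum_mul]
  exact sum_le_sum fun i hi ↦ mul_le_mul_of_nonneg_left (single_le_sum hb hi) (ha i hi)

variable [DecidableEq ι]

theorem Finset.sum_offDiag_mul [CommRing R] (s : Finset ι) (f : ι → R) :
    ∑ p ∈ s.offDiag, f p.1 * f p.2 = (∑ i ∈ s, f i) ^ 2 - ∑ i ∈ s, f i ^ 2 := by
  rw [sq, sum_mul_sum, ← sum_product', ← diag_union_offDiag, sum_union (disjoint_diag_offDiag s),
    sum_diag]
  simp only [sq, add_sub_cancel_left]

variable [CommRing R] [LinearOrder R] [IsStrictOrderedRing R]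

theorem Finset.two_mul_mul_le_sum_sq {s : Finset ι} {i j : ι} (hi : i ∈ s) (hj : j ∈ s)
    (hij : i ≠ j) (y : ι → R) : 2 * (y i * y j) ≤ ∑ k ∈ s, y k ^ 2 := by
  have hpair : y i ^ 2 + y j ^ 2 ≤ ∑ k ∈ s, y k ^ 2 := by
    rw [← sum_pair (f := fun k ↦ y k ^ 2) hij]
    exact sum_le_sum_of_subset_of_nonneg (by simp [insert_subset_iff, hi, hj])
      fun k _ _ ↦ sq_nonneg (y k)
  nlinarith [two_mul_le_add_sq (y i) (y j)]

theorem Finset.eight_mul_sum_offDiag_sq_mul_sq_le {s : Finset ι} {y : ι → R}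
    (hy : ∀ i ∈ s, 0 ≤ y i) :
    8 * ∑ p ∈ s.offDiag, y p.1 ^ 2 * y p.2 ^ 2 ≤ (∑ i ∈ s, y i) ^ 4 := by
  set q := ∑ i ∈ s, y i ^ 2
  have hpair : ∀ p ∈ s.offDiag, 2 * (y p.1 ^ 2 * y p.2 ^ 2) ≤ q * (y p.1 * y p.2) := by
    rintro ⟨i, j⟩ hp
    obtain ⟨hi, hj, hij⟩ := mem_offDiag.mp hp
    have hyy : 0 ≤ y i * y j := mul_nonneg (hy i hi) (hy j hj)
    have := mul_le_mul_of_nonneg_right (two_mul_mul_le_sum_sq hi hj hij y) hyy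
    linarith [show y i ^ 2 * y j ^ 2 = (y i * y j) * (y i * y j) by ring]
  have hsum : 2 * ∑ p ∈ s.offDiag, y p.1 ^ 2 * y p.2 ^ 2 ≤ q * ((∑ i ∈ s, y i) ^ 2 - q) := by
    rw [← sum_offDiag_mul, mul_sum, mul_sum]
    exact sum_le_sum hpair
  nlinarith [sq_nonneg ((∑ i ∈ s, y i) ^ 2 - 2 * q)]

theorem Finset.eight_mul_sum_offDiag_le {s : Finset ι} {a b : ι → R} (ha : ∀ i ∈ s, 0 ≤ a i)
    (hb : ∀ i ∈ s, 0 ≤ b i) :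
    8 * ∑ p ∈ s.offDiag, a p.1 * b p.1 * (a p.2 * b p.2) ≤
      (∑ i ∈ s, a i) ^ 2 * (∑ i ∈ s, b i) ^ 2 := by
  set A := ∑ i ∈ s, a i
  set B := ∑ i ∈ s, b i
  set X := ∑ p ∈ s.offDiag, a p.1 * b p.1 * (a p.2 * b p.2)
  have hA : 0 ≤ A := sum_nonneg ha
  have hB : 0 ≤ B := sum_nonneg hb
  have hw : ∀ i ∈ s, 0 ≤ B * a i + A * b i := fun i hi ↦
    add_nonneg (mul_nonneg hB (ha i hi)) (mul_nonneg hA (hb i hi))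
  have hamgm : ∀ i ∈ s, 4 * (A * B) * (a i * b i) ≤ (B * a i + A * b i) ^ 2 := fun i _ ↦ by
    nlinarith [sq_nonneg (B * a i - A * b i)]
  have hweights : 16 * (A * B) ^ 2 * X ≤ ∑ p ∈ s.offDiag,
      (B * a p.1 + A * b p.1) ^ 2 * (B * a p.2 + A * b p.2) ^ 2 := by
    rw [mul_sum]
    refine sum_le_sum fun p hp ↦ ?_
    obtain ⟨hi, hj, -⟩ := mem_offDiag.mp hp
    have := mul_le_mul (hamgm _ hi) (hamgm _ hj)
      (mul_nonneg (by positivity) (mul_nonneg (ha _ hj) (hb _ hj))) (sq_nonneg _)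
    linarith
  have htotal : ∑ i ∈ s, (B * a i + A * b i) = 2 * (A * B) := by
    rw [sum_add_distrib, ← mul_sum, ← mul_sum]; ring
  have key : 16 * (A * B) ^ 2 * X ≤ 2 * (A * B) ^ 4 := by
    have := eight_mul_sum_offDiag_sq_mul_sq_le hw
    rw [htotal] at this
    linarith
  -- `key` is empty when `A B = 0`; this crude bound covers that case.
  have hcrude : X ≤ (A * B) ^ 2 := by
    have hx : ∀ i ∈ s, 0 ≤ a i * b i := fun i hi ↦ mul_nonneg (ha i hi) (hb i hi)
    have := sum_mul_le_sum_mul_sum ha hb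
    have hX : X = (∑ i ∈ s, a i * b i) ^ 2 - ∑ i ∈ s, (a i * b i) ^ 2 :=
      sum_offDiag_mul s fun i ↦ a i * b i
    nlinarith [sum_nonneg hx, sum_nonneg fun i (_ : i ∈ s) ↦ sq_nonneg (a i * b i)]
  rw [← mul_pow]
  rcases (mul_nonneg hA hB).eq_or_lt with hAB | hAB
  · rw [← hAB] at hcrude ⊢; linarith
  · nlinarith [pow_pos hAB 2]

theorem stmt_1 (n : ℕ) (a b : Fin n → ℝ) (ha : ∀ i, 0 ≤ a i) (hb : ∀ i, 0 ≤ b i) :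
    (∑ i, a i * b i) ^ 2 - ∑ i, (a i) ^ 2 * (b i) ^ 2 ≤
      (1 / 8) * (∑ i, a i) ^ 2 * (∑ i, b i) ^ 2 := by
  have := eight_mul_sum_offDiag_le (s := univ) (fun i _ ↦ ha i) (fun i _ ↦ hb i)
  rw [sum_offDiag_mul univ fun i ↦ a i * b i] at this
  simp only [mul_pow] at this
  linarith
end

section
/- If G is a finite simple graph on vertex set V with edge set E and m is a positive integer, then the number of (unlabeled) copies of the path P_{2m} on 2m vertices in G is at most (2|E|)^m / 2. -/
/-!
A copy of `P_{2m}` in `G` is the image of the injective homomorphisms `f ∘ σ`, for one such `f`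
and every automorphism `σ` of `P_{2m}`; the reversal makes that at least two of them.
An injective homomorphism `f` is determined by the `m` darts `(f (2i), f (2i+1))` of `G`,
because the darts `(2i, 2i+1)` cover the path; `G` has `2|E|` darts.
-/

open Finset SimpleGraph

namespace SimpleGraph

variable {α V : Type*} {A : SimpleGraph α} {G : SimpleGraph V}

lemma Subgraph.map_top_of_iso {β : Type*} {B : SimpleGraph β} (σ : A ≃g B) :
    (⊤ : A.Subgraph).map σ.toHom = ⊤ := by
  ext x y
  · simp
  · simp only [Subgraph.map_adj, Subgraph.top_adj]
    constructor
    · rintro ⟨a, b, hab, rfl, rfl⟩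
      exact σ.map_adj_iff.2 hab
    · intro hxy
      obtain ⟨a, rfl⟩ := σ.surjective x
      obtain ⟨b, rfl⟩ := σ.surjective y
      exact ⟨a, b, σ.map_adj_iff.1 hxy, rfl, rfl⟩

lemma Copy.toSubgraph_comp_iso (f : Copy A G) (σ : A ≃g A) :
    (f.comp σ.toCopy).toSubgraph = f.toSubgraph := by
  have h := Subgraph.map_comp ⊤ σ.toHom f.toHom
  rw [Subgraph.map_top_of_iso] at h
  exact h

instance Iso.finite {β : Type*} {B : SimpleGraph β} [Finite α] [Finite β] : Finite (A ≃g B) :=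
  Finite.of_injective _ RelIso.toEquiv_injective

lemma natCard_aut_mul_copyCount_le_labelledCopyCount [Fintype α] [Fintype V] :
    Nat.card (A ≃g A) * G.copyCount A ≤ G.labelledCopyCount A := by
  classical
  rw [copyCount_eq_card_image_copyToSubgraph, labelledCopyCount, ← Finset.card_univ]
  refine mul_card_image_le_card _ _ fun S hS ↦ ?_
  obtain ⟨f, -, rfl⟩ := mem_image.1 hS
  rw [← Nat.card_eq_finsetCard]
  refine Nat.card_le_card_of_injective
    (fun σ ↦ ⟨f.comp σ.toCopy, by simp [Copy.toSubgraph_comp_iso]⟩) fun σ τ hστ ↦ ?_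
  ext a
  exact f.injective (congrArg (fun g : Copy A G ↦ g a) (congrArg Subtype.val hστ))

lemma labelledCopyCount_eq_natCard [Fintype α] [Fintype V] :
    G.labelledCopyCount A = Nat.card (Copy A G) := by
  classical
  rw [labelledCopyCount, Nat.card_eq_fintype_card]

lemma labelledCopyCount_le_pow_of_dart_cover [Fintype α] [Fintype V] [DecidableEq V]
    [DecidableRel G.Adj] {ι : Type*} [Fintype ι] (d : ι → A.Dart)
    (hd : ∀ a, ∃ i, (d i).fst = a ∨ (d i).snd = a) :
    G.labelledCopyCount A ≤ (2 * #G.edgeFinset) ^ Fintype.card ι := by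
  classical
  rw [labelledCopyCount_eq_natCard, ← G.dart_card_eq_twice_card_edges, ← Fintype.card_fun,
    ← Nat.card_eq_fintype_card]
  refine Nat.card_le_card_of_injective (fun f i ↦ f.toHom.mapDart (d i)) fun f g hfg ↦ ?_
  ext a
  obtain ⟨i, hi⟩ := hd a
  have := congrFun hfg i
  simp only [Hom.mapDart_apply, Dart.mk.injEq, Prod.map, Prod.mk.injEq, Copy.coe_toHom] at this
  rcases hi with rfl | rfl
  exacts [this.1, this.2]

def pathGraph.reverse (n : ℕ) : pathGraph n ≃g pathGraph n where
  toEquiv := Fin.revPerm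
  map_rel_iff' {i j} := by
    simp only [Fin.revPerm_apply, pathGraph_adj, Fin.val_rev]
    omega

lemma one_lt_natCard_aut_pathGraph {n : ℕ} (hn : 2 ≤ n) :
    1 < Nat.card (pathGraph n ≃g pathGraph n) := by
  have : Nontrivial (pathGraph n ≃g pathGraph n) := by
    refine ⟨⟨pathGraph.reverse n, .refl, fun h ↦ ?_⟩⟩
    have := congrArg Fin.val (RelIso.ext_iff.1 h ⟨0, by omega⟩)
    simp [pathGraph.reverse] at this
    omega
  exact Finite.one_lt_card

def pathGraph.pairDart (m : ℕ) (i : Fin m) : (pathGraph (2 * m)).Dart :=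
  ⟨(⟨2 * i, by omega⟩, ⟨2 * i + 1, by omega⟩), by simp [pathGraph_adj]⟩

lemma pathGraph.exists_pairDart_fst_or_snd_eq (m : ℕ) (a : Fin (2 * m)) :
    ∃ i, (pathGraph.pairDart m i).fst = a ∨ (pathGraph.pairDart m i).snd = a :=
  ⟨⟨a / 2, by omega⟩, by simp only [pathGraph.pairDart, Fin.ext_iff]; omega⟩

lemma natCard_subgraph_iso_eq_copyCount [Fintype V] (G : SimpleGraph V) (A : SimpleGraph α) :
    Nat.card {H : G.Subgraph // Nonempty (H.coe ≃g A)} = G.copyCount A := by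
  classical
  rw [copyCount, ← Nat.card_eq_finsetCard]
  exact Nat.card_congr <| Equiv.subtypeEquivRight fun H ↦ by
    simpa using ⟨fun ⟨e⟩ ↦ ⟨e.symm⟩, fun ⟨e⟩ ↦ ⟨e.symm⟩⟩

end SimpleGraph

/-- The number of unlabeled copies of the path `P_{2m}` in `G`, i.e. subgraphs of `G`
isomorphic to `pathGraph (2*m)`, is at most `(2|E|)^m / 2`. -/
theorem stmt_4 {V : Type*} [Fintype V] [DecidableEq V] (G : SimpleGraph V)
    [DecidableRel G.Adj] (m : ℕ) (hm : 0 < m) :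
    (Nat.card {H' : G.Subgraph // Nonempty (H'.coe ≃g SimpleGraph.pathGraph (2 * m))} : ℝ) ≤
      (2 * G.edgeFinset.card : ℝ) ^ m / 2 := by
  have hcount : 2 * Nat.card {H' : G.Subgraph // Nonempty (H'.coe ≃g pathGraph (2 * m))} ≤
      (2 * #G.edgeFinset) ^ m := calc
    _ ≤ Nat.card (pathGraph (2 * m) ≃g pathGraph (2 * m)) * G.copyCount (pathGraph (2 * m)) := by
      rw [natCard_subgraph_iso_eq_copyCount]
      gcongr
      exact one_lt_natCard_aut_pathGraph (by omega)
    _ ≤ G.labelledCopyCount (pathGraph (2 * m)) := natCard_aut_mul_copyCount_le_labelledCopyCount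
    _ ≤ (2 * #G.edgeFinset) ^ m := by
      simpa using
        labelledCopyCount_le_pow_of_dart_cover _ (pathGraph.exists_pairDart_fst_or_snd_eq m)
  rw [le_div_iff₀ two_pos, mul_comm]
  exact_mod_cast hcount
end

section
/- Let C > 0 and let G = (V,E) be an n-vertex simple graph with no copy of K_{3,3} such that every subgraph H of G satisfies |E(H)| ≤ C·|V(H)|. For ε > 0, let Ṽ = {v ∈ V : deg(v) ≥ εn}. Then the sum over unordered pairs {u,v} ⊆ Ṽ of the codegree deg(u,v) = |N(u) ∩ N(v)| is at most n + 4·(C/ε)⁴. -/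
/-!
Let `S` be the set of vertices of degree at least `εn` and `m = |S|`. Since `G` has at most `Cn`
edges, `m · εn ≤ 2Cn`, so `m ≤ 2C/ε`. Counting, for each vertex `w`, the ordered pairs of
`S`-neighbours of `w` gives `∑_{u ≠ v ∈ S} deg(u,v) = ∑_w d_w(d_w - 1)` with `d_w = |S ∩ N(w)|`,
and `d(d-1) ≤ 2 + 6·C(d,3)`. Counting triples instead, `K_{3,3}`-freeness says every triple of
`S` has at most two common neighbours, so `∑_w C(d_w,3) ≤ 2·C(m,3)`. Altogether the ordered sum is
at most `2n + 12·C(m,3) ≤ 2n + m⁴/2 ≤ 2n + 8(C/ε)⁴`.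
-/

open Finset Fintype

theorem Nat.mul_self_sub_le_two_add_six_mul_choose_three (k : ℕ) :
    k * k - k ≤ 2 + 6 * k.choose 3 := by
  rcases le_or_gt k 2 with hk | hk
  · interval_cases k <;> simp
  have h2 : k.choose 2 * 2 = k * (k - 1) := by
    simpa [Nat.choose_one_right] using Nat.choose_succ_right_eq k 1
  have h3 : k.choose 3 * 3 = k.choose 2 * (k - 2) := Nat.choose_succ_right_eq k 2
  have h4 : k.choose 2 ≤ k.choose 2 * (k - 2) := Nat.le_mul_of_pos_right _ (by omega)
  rw [← Nat.mul_sub_one]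
  omega

theorem Nat.twentyFour_mul_choose_three_le_pow_four (m : ℕ) : 24 * m.choose 3 ≤ m ^ 4 := by
  rcases lt_or_ge m 4 with hm | hm
  · interval_cases m <;> decide
  have h : 6 * m.choose 3 ≤ m ^ 3 := by
    rw [show 6 = Nat.factorial 3 from rfl, ← Nat.descFactorial_eq_factorial_mul_choose]
    exact Nat.descFactorial_le_pow m 3
  calc 24 * m.choose 3 ≤ 4 * m ^ 3 := by omega
    _ ≤ m * m ^ 3 := Nat.mul_le_mul_right _ hm
    _ = m ^ 4 := by ring

namespace SimpleGraph

theorem free_of_not_exists_injective_hom {V W : Type*} {G : SimpleGraph V} {H : SimpleGraph W}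
    (h : ¬ ∃ f : H →g G, Function.Injective f) : H.Free G :=
  fun ⟨f⟩ ↦ h ⟨f.toHom, f.injective⟩

variable {V : Type*} [Fintype V] {G : SimpleGraph V} [DecidableRel G.Adj]

theorem card_filter_le_degree_mul_le (δ : ℝ) :
    (#{v | δ ≤ G.degree v} : ℝ) * δ ≤ 2 * #G.edgeFinset := by
  calc (#{v | δ ≤ G.degree v} : ℝ) * δ ≤ ∑ v ∈ {v | δ ≤ G.degree v}, (G.degree v : ℝ) := by
        simpa [nsmul_eq_mul] using
          card_nsmul_le_sum _ (fun v ↦ (G.degree v : ℝ)) δ fun v hv ↦ (mem_filter.mp hv).2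
    _ ≤ ∑ v, (G.degree v : ℝ) :=
        sum_le_sum_of_subset_of_nonneg (subset_univ _) fun _ _ _ ↦ by positivity
    _ = 2 * #G.edgeFinset := by exact_mod_cast G.sum_degrees_eq_twice_card_edges

theorem card_filter_le_degree_le {C ε : ℝ} (hε : 0 < ε) (hV : 0 < card V)
    (hE : (#G.edgeFinset : ℝ) ≤ C * card V) :
    (#{v | ε * card V ≤ G.degree v} : ℝ) ≤ 2 * C / ε := by
  have hV' : (0 : ℝ) < card V := by exact_mod_cast hV
  rw [le_div_iff₀ hε]
  refine le_of_mul_le_mul_right ?_ hV'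
  calc _ = (#{v | ε * card V ≤ G.degree v} : ℝ) * (ε * card V) := by ring
    _ ≤ 2 * #G.edgeFinset := card_filter_le_degree_mul_le _
    _ ≤ 2 * C * card V := by linarith

variable [DecidableEq V]

theorem sum_offDiag_card_inter_neighborFinset (S : Finset V) :
    ∑ p ∈ S.offDiag, #(G.neighborFinset p.1 ∩ G.neighborFinset p.2) =
      ∑ w, #(S ∩ G.neighborFinset w).offDiag := by
  convert sum_card_bipartiteAbove_eq_sum_card_bipartiteBelow
    (s := S.offDiag) (t := univ) (r := fun p w ↦ G.Adj p.1 w ∧ G.Adj p.2 w) using 3 with p _ w _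
  · ext; simp [bipartiteAbove]
  · ext; simp [bipartiteBelow, adj_comm]; tauto

variable {α β : Type*} [Fintype α] [Fintype β]

theorem card_filter_subset_neighborFinset_lt (hfree : (completeBipartiteGraph α β).Free G)
    {T : Finset V} (hT : #T = card α) : #{w | T ⊆ G.neighborFinset w} < card β := by
  by_contra! h
  obtain ⟨W, hW, hWcard⟩ := exists_subset_card_eq h
  refine hfree (completeBipartiteGraph_isContained_iff.mpr ⟨T, W, hT, hWcard, ?_⟩)
  intro v hv w hw
  exact ((G.mem_neighborFinset w v).mp ((mem_filter.mp (hW hw)).2 hv)).symm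

theorem sum_choose_card_inter_neighborFinset_le (hfree : (completeBipartiteGraph α β).Free G)
    (S : Finset V) :
    ∑ w, (#(S ∩ G.neighborFinset w)).choose (card α) ≤ (card β - 1) * (#S).choose (card α) := by
  let r : Finset V → V → Prop := fun T w ↦ T ⊆ G.neighborFinset w
  calc ∑ w, (#(S ∩ G.neighborFinset w)).choose (card α)
      = ∑ w, #((S.powersetCard (card α)).bipartiteBelow r w) := by
        refine sum_congr rfl fun w _ ↦ ?_
        rw [← card_powersetCard]
        congr 1; ext T
        simp only [r, bipartiteBelow, mem_powersetCard, mem_filter, subset_inter_iff]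
        tauto
    _ = ∑ T ∈ S.powersetCard (card α), #(univ.bipartiteAbove r T) :=
        (sum_card_bipartiteAbove_eq_sum_card_bipartiteBelow _).symm
    _ ≤ ∑ T ∈ S.powersetCard (card α), (card β - 1) := sum_le_sum fun T hT ↦
        Nat.le_sub_one_of_lt <| by
          simpa [bipartiteAbove] using
            card_filter_subset_neighborFinset_lt hfree (mem_powersetCard.mp hT).2
    _ = (card β - 1) * (#S).choose (card α) := by simp [card_powersetCard, mul_comm]

theorem sum_offDiag_card_inter_neighborFinset_le
    (hfree : (completeBipartiteGraph (Fin 3) (Fin 3)).Free G) (S : Finset V) :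
    ∑ p ∈ S.offDiag, #(G.neighborFinset p.1 ∩ G.neighborFinset p.2) ≤
      2 * card V + 12 * (#S).choose 3 := by
  have htriples := sum_choose_card_inter_neighborFinset_le hfree S
  simp only [Fintype.card_fin] at htriples
  calc ∑ p ∈ S.offDiag, #(G.neighborFinset p.1 ∩ G.neighborFinset p.2)
      = ∑ w, #(S ∩ G.neighborFinset w).offDiag := sum_offDiag_card_inter_neighborFinset S
    _ ≤ ∑ w, (2 + 6 * (#(S ∩ G.neighborFinset w)).choose 3) := sum_le_sum fun w _ ↦ by
        rw [offDiag_card]; exact Nat.mul_self_sub_le_two_add_six_mul_choose_three _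
    _ = 2 * card V + 6 * ∑ w, (#(S ∩ G.neighborFinset w)).choose 3 := by
        rw [sum_add_distrib, ← mul_sum, sum_const, card_univ, smul_eq_mul, mul_comm]
    _ ≤ 2 * card V + 12 * (#S).choose 3 := by omega

end SimpleGraph

theorem stmt_7_general {V : Type*} [Fintype V] [DecidableEq V] (G : SimpleGraph V)
    [DecidableRel G.Adj] (C ε : ℝ) (hε : 0 < ε)
    (hK33 : ¬ ∃ f : completeBipartiteGraph (Fin 3) (Fin 3) →g G, Function.Injective f)
    (hsparse : ∀ H : G.Subgraph, (H.edgeSet.ncard : ℝ) ≤ C * H.verts.ncard) :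
    (∑ p ∈ (Finset.univ.filter fun v => ε * Fintype.card V ≤ G.degree v).offDiag,
        ((G.neighborFinset p.1 ∩ G.neighborFinset p.2).card : ℝ)) / 2 ≤
      Fintype.card V + 4 * (C / ε) ^ 4 := by
  set S := Finset.univ.filter fun v => ε * Fintype.card V ≤ G.degree v
  have hE : (#G.edgeFinset : ℝ) ≤ C * card V := by
    simpa [← SimpleGraph.coe_edgeFinset, Set.ncard_coe_finset] using hsparse ⊤
  have hS : (#S : ℝ) ^ 4 ≤ 16 * (C / ε) ^ 4 := by
    rcases (#S).eq_zero_or_pos with h0 | hpos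
    · rw [h0, Nat.cast_zero, zero_pow (by norm_num)]; positivity
    have hS := SimpleGraph.card_filter_le_degree_le hε (hpos.trans_le (card_le_univ S)) hE
    calc (#S : ℝ) ^ 4 ≤ (2 * C / ε) ^ 4 := by gcongr
      _ = 16 * (C / ε) ^ 4 := by ring
  have hcodeg : (∑ p ∈ S.offDiag, (#(G.neighborFinset p.1 ∩ G.neighborFinset p.2) : ℝ)) ≤
      2 * card V + 12 * (#S).choose 3 := by
    exact_mod_cast SimpleGraph.sum_offDiag_card_inter_neighborFinset_le
      (SimpleGraph.free_of_not_exists_injective_hom hK33) S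
  have hchoose : (24 * (#S).choose 3 : ℝ) ≤ (#S) ^ 4 := by
    exact_mod_cast Nat.twentyFour_mul_choose_three_le_pow_four #S
  linarith

/-- The sum over unordered pairs `{u,v} ⊆ Ṽ` of codegrees is written as half the sum
over ordered pairs of distinct vertices of `Ṽ`. -/
theorem stmt_7 {V : Type*} [Fintype V] [DecidableEq V] (G : SimpleGraph V)
    [DecidableRel G.Adj] (C ε : ℝ) (hC : 0 < C) (hε : 0 < ε)
    (hK33 : ¬ ∃ f : completeBipartiteGraph (Fin 3) (Fin 3) →g G, Function.Injective f)
    (hsparse : ∀ H : G.Subgraph, (H.edgeSet.ncard : ℝ) ≤ C * H.verts.ncard) :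
    (∑ p ∈ (Finset.univ.filter fun v => ε * Fintype.card V ≤ G.degree v).offDiag,
        ((G.neighborFinset p.1 ∩ G.neighborFinset p.2).card : ℝ)) / 2 ≤
      Fintype.card V + 4 * (C / ε) ^ 4 :=
  stmt_7_general G C ε hε hK33 hsparse
end

section
/- Let H be a graph on m edges with no isolated vertices, let k be a positive integer with k·δ(H) ≥ 2 where δ(H) is the minimum degree of H, and let G = (V,E) be any simple graph. Then the sum, over all copies H' of H with V(H') ⊆ V (copies in the complete graph on V), of the product over edges xy of H' of deg_G(x,y)^k, is at most (2|E|)^{km} / |Aut H|. -/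
/-!
Every unlabelled copy of `H` in `K_V` is the image of exactly `|Aut H|` injective maps
`W → V`, so `|Aut H|` times the left-hand side is at most the sum over *all* maps `g : W → V` of
`∏_{ab ∈ E(H)} deg_G(g a, g b)^k`. A codegree is at most both degrees `d(x)`, `d(y)` in `G`, so
`deg_G(x, y)^k ≤ (d(x) d(y))^{k/2}` and the product over the edges of `H` is at most
`∏_w d(g w)^{k deg_H(w)/2}`. Summed over `g` this factors as `∏_w ∑_v d(v)^{k deg_H(w)/2}`. Every
exponent is at least `1` because `k δ(H) ≥ 2`, so each factor is at most
`(∑_v d(v))^{k deg_H(w)/2} = (2|E|)^{k deg_H(w)/2}`, and the exponents add up to `k m`.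
-/

open Finset

theorem Real.pow_le_rpow_half_mul_rpow_half {n a b : ℝ} (hn : 0 ≤ n) (ha : n ≤ a) (hb : n ≤ b)
    (k : ℕ) : n ^ k ≤ a ^ (k / 2 : ℝ) * b ^ (k / 2 : ℝ) := by
  calc n ^ k = n ^ (k / 2 : ℝ) * n ^ (k / 2 : ℝ) := by
        rw [← Real.rpow_add_of_nonneg hn (by positivity) (by positivity), add_halves,
          Real.rpow_natCast]
    _ ≤ a ^ (k / 2 : ℝ) * b ^ (k / 2 : ℝ) := by
        gcongr
        exact Real.rpow_nonneg (hn.trans ha) _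

namespace Finset

theorem sum_rpow_le_rpow_sum {ι : Type*} (s : Finset ι) {a : ι → ℝ} (ha : ∀ i ∈ s, 0 ≤ a i)
    {p : ℝ} (hp : 1 ≤ p) : ∑ i ∈ s, a i ^ p ≤ (∑ i ∈ s, a i) ^ p := by
  induction s using Finset.cons_induction with
  | empty => simp [Real.zero_rpow (by linarith : p ≠ 0)]
  | cons i s hi ih =>
    have hs : ∀ j ∈ s, 0 ≤ a j := fun j hj => ha j (mem_cons_of_mem hj)
    rw [sum_cons, sum_cons]
    calc a i ^ p + ∑ j ∈ s, a j ^ p ≤ a i ^ p + (∑ j ∈ s, a j) ^ p := by gcongr; exact ih hs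
      _ ≤ _ := Real.add_rpow_le_rpow_add (ha i (mem_cons_self i s)) (sum_nonneg hs) hp

end Finset

namespace SimpleGraph

section Degree

variable {W : Type*} [Fintype W] (H : SimpleGraph W) [DecidableRel H.Adj]

theorem prod_dart_fst {M : Type*} [CommMonoid M] (b : W → M) :
    ∏ d : H.Dart, b d.fst = ∏ w, b w ^ H.degree w := by
  classical
  rw [← prod_fiberwise univ (fun d : H.Dart => d.fst)]
  refine prod_congr rfl fun w _ => ?_
  rw [prod_congr rfl fun d hd => congrArg b (mem_filter.1 hd).2, prod_const]
  congr 1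
  convert H.dart_fst_fiber_card_eq_degree w

theorem prod_edgeFinset_lift_mul {M : Type*} [CommMonoid M] (b : W → M) :
    ∏ e ∈ H.edgeFinset, Sym2.lift ⟨fun x y => b x * b y, fun _ _ => mul_comm _ _⟩ e =
      ∏ w, b w ^ H.degree w := by
  classical
  rw [← prod_dart_fst, ← prod_fiberwise_of_maps_to (t := H.edgeFinset) (g := Dart.edge)
    fun d _ => mem_edgeFinset.2 d.edge_mem]
  refine prod_congr rfl fun e he => ?_
  induction e using Sym2.ind with
  | _ x y =>
    let d : H.Dart := ⟨(x, y), mem_edgeFinset.1 he⟩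
    have hfiber : univ.filter (fun d' : H.Dart => d'.edge = s(x, y)) = {d, d.symm} := by
      convert d.edge_fiber; rfl
    rw [hfiber, prod_pair d.symm_ne.symm]
    rfl

theorem prod_edgeFinset_le_prod_rpow_degree {V : Type*} (c : Sym2 V → ℝ) (hc0 : ∀ e, 0 ≤ c e)
    (d : V → ℝ) (hd : ∀ v, 0 ≤ d v) {p : ℝ} (hc : ∀ x y, c s(x, y) ≤ d x ^ (p / 2) * d y ^ (p / 2))
    (g : W → V) :
    ∏ e ∈ H.edgeFinset, c (e.map g) ≤ ∏ w, d (g w) ^ (p / 2 * H.degree w) := by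
  calc ∏ e ∈ H.edgeFinset, c (e.map g)
      ≤ ∏ e ∈ H.edgeFinset, Sym2.lift ⟨fun x y => d (g x) ^ (p / 2) * d (g y) ^ (p / 2),
          fun _ _ => mul_comm _ _⟩ e := by
        refine prod_le_prod (fun e _ => hc0 _) fun e _ => ?_
        induction e using Sym2.ind with
        | _ x y => exact hc (g x) (g y)
    _ = ∏ w, d (g w) ^ (p / 2 * H.degree w) := by
        rw [prod_edgeFinset_lift_mul]
        simp_rw [Real.rpow_mul (hd _), Real.rpow_natCast]

theorem sum_prod_rpow_degree_le [DecidableEq W] {V : Type*} [Fintype V] (d : V → ℝ)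
    (hd : ∀ v, 0 ≤ d v) {p : ℝ} (hp : 2 ≤ p * H.minDegree) :
    ∑ g : W → V, ∏ w, d (g w) ^ (p / 2 * H.degree w) ≤ (∑ v, d v) ^ (p * #H.edgeFinset) := by
  have hp0 : 0 < p := by
    by_contra! hp0
    linarith [mul_nonpos_of_nonpos_of_nonneg hp0 (Nat.cast_nonneg (α := ℝ) H.minDegree)]
  have hexp : ∀ w, 1 ≤ p / 2 * H.degree w := fun w => by
    have hδ : (H.minDegree : ℝ) ≤ H.degree w := by exact_mod_cast H.minDegree_le_degree w
    linarith [mul_le_mul_of_nonneg_left hδ hp0.le]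
  have hsum : ∑ w, p / 2 * (H.degree w : ℝ) = p * #H.edgeFinset := by
    rw [← mul_sum, ← Nat.cast_sum, sum_degrees_eq_twice_card_edges]
    push_cast
    ring
  calc ∑ g : W → V, ∏ w, d (g w) ^ (p / 2 * H.degree w)
      = ∏ w, ∑ v, d v ^ (p / 2 * H.degree w) :=
        (Fintype.prod_sum fun w v => d v ^ (p / 2 * H.degree w)).symm
    _ ≤ ∏ w, (∑ v, d v) ^ (p / 2 * H.degree w) :=
        prod_le_prod (fun _ _ => sum_nonneg fun _ _ => Real.rpow_nonneg (hd _) _)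
          fun w _ => sum_rpow_le_rpow_sum _ (fun v _ => hd v) (hexp w)
    _ = (∑ v, d v) ^ (p * #H.edgeFinset) := by
        rw [← hsum, Real.rpow_sum_of_nonneg (sum_nonneg fun v _ => hd v)
          fun w _ => zero_le_one.trans (hexp w)]

end Degree

section Codegree

variable {V : Type*} [Fintype V] [DecidableEq V] (G : SimpleGraph V) [DecidableRel G.Adj]

def codegree (x y : V) : ℕ := #(G.neighborFinset x ∩ G.neighborFinset y)

lemma codegree_comm (x y : V) : G.codegree x y = G.codegree y x := by
  rw [codegree, codegree, inter_comm]

lemma codegree_le_degree_left (x y : V) : G.codegree x y ≤ G.degree x :=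
  (card_le_card inter_subset_left).trans_eq (G.card_neighborFinset_eq_degree x)

lemma codegree_le_degree_right (x y : V) : G.codegree x y ≤ G.degree y :=
  (card_le_card inter_subset_right).trans_eq (G.card_neighborFinset_eq_degree y)

theorem sum_prod_codegree_pow_le {W : Type*} [Fintype W] [DecidableEq W] (H : SimpleGraph W)
    [DecidableRel H.Adj] (k : ℕ) (hδ : 2 ≤ k * H.minDegree) :
    ∑ g : W → V, ∏ e ∈ H.edgeFinset,
        Sym2.lift ⟨fun x y => (G.codegree x y : ℝ) ^ k,
          fun x y => congrArg (fun n : ℕ => (n : ℝ) ^ k) (G.codegree_comm x y)⟩ (e.map g) ≤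
      (2 * #G.edgeFinset : ℝ) ^ (k * #H.edgeFinset) := by
  have hdeg : ∀ v, (0 : ℝ) ≤ G.degree v := fun v => Nat.cast_nonneg _
  calc _ ≤ ∑ g : W → V, ∏ w, (G.degree (g w) : ℝ) ^ ((k : ℝ) / 2 * H.degree w) :=
        sum_le_sum fun g _ => H.prod_edgeFinset_le_prod_rpow_degree _
          (Sym2.ind fun x y => by rw [Sym2.lift_mk]; positivity) _ hdeg
          (fun x y => Real.pow_le_rpow_half_mul_rpow_half (Nat.cast_nonneg _)
            (by exact_mod_cast G.codegree_le_degree_left x y)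
            (by exact_mod_cast G.codegree_le_degree_right x y) k) g
    _ ≤ (∑ v, (G.degree v : ℝ)) ^ ((k : ℝ) * #H.edgeFinset) :=
        H.sum_prod_rpow_degree_le _ hdeg (by exact_mod_cast hδ)
    _ = (2 * #G.edgeFinset : ℝ) ^ (k * #H.edgeFinset) := by
        rw [← Nat.cast_sum, sum_degrees_eq_twice_card_edges]
        norm_cast

end Codegree

end SimpleGraph

namespace SimpleGraph.Copy

variable {α β : Type*} {A : SimpleGraph α} {B : SimpleGraph β}

def ofIsoSubgraph {B' : B.Subgraph} (ψ : A ≃g B'.coe) : Copy A B :=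
  ⟨B'.hom.comp ψ.toHom, Subgraph.hom_injective.comp ψ.injective⟩

lemma toSubgraph_ofIsoSubgraph {B' : B.Subgraph} (ψ : A ≃g B'.coe) :
    (ofIsoSubgraph ψ).toSubgraph = B' := by
  simp [ofIsoSubgraph, toSubgraph, Subgraph.map_comp]

lemma ofIsoSubgraph_injective {B' : B.Subgraph} :
    Function.Injective (ofIsoSubgraph : (A ≃g B'.coe) → Copy A B) := fun _ _ h =>
  RelIso.ext fun a => Subtype.ext (DFunLike.congr_fun h a)

lemma ofIsoSubgraph_isoToSubgraph (f : Copy A B) : ofIsoSubgraph f.isoToSubgraph = f := by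
  ext a
  rfl

noncomputable def isoEquivToSubgraphFiber (B' : B.Subgraph) :
    (A ≃g B'.coe) ≃ {f : Copy A B // f.toSubgraph = B'} :=
  Equiv.ofBijective (fun ψ => ⟨ofIsoSubgraph ψ, toSubgraph_ofIsoSubgraph ψ⟩)
    ⟨fun _ _ h => ofIsoSubgraph_injective (congrArg Subtype.val h), by
      rintro ⟨f, rfl⟩
      exact ⟨f.isoToSubgraph, Subtype.ext (ofIsoSubgraph_isoToSubgraph f)⟩⟩

lemma natCard_toSubgraphFiber {B' : B.Subgraph} (e : B'.coe ≃g A) :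
    Nat.card {f : Copy A B // f.toSubgraph = B'} = Nat.card (A ≃g A) :=
  (Nat.card_congr (isoEquivToSubgraphFiber B')).symm.trans <| Nat.card_congr
    ⟨fun ψ => ψ.trans e, fun χ => χ.trans e.symm, fun ψ => by ext; simp, fun χ => by ext; simp⟩

lemma finprod_mem_edgeSet_toSubgraph {M : Type*} [CommMonoid M] [Fintype A.edgeSet]
    (f : Copy A B) (c : Sym2 β → M) :
    ∏ᶠ e ∈ f.toSubgraph.edgeSet, c e = ∏ e ∈ A.edgeFinset, c (e.map f) := by
  rw [Subgraph.edgeSet_map, Subgraph.edgeSet_top,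
    finprod_mem_image (Sym2.map.injective f.injective).injOn, ← coe_edgeFinset,
    finprod_mem_coe_finset]
  rfl

theorem sum_toSubgraph [Fintype (Copy A B)] [Finite β] {M : Type*} [AddCommMonoid M]
    (F : B.Subgraph → M) :
    ∑ f : Copy A B, F f.toSubgraph =
      Nat.card (A ≃g A) • ∑ᶠ B' ∈ {B' : B.Subgraph | Nonempty (B'.coe ≃g A)}, F B' := by
  classical
  have hfin := Set.toFinite {B' : B.Subgraph | Nonempty (B'.coe ≃g A)}
  rw [finsum_mem_eq_finite_toFinset_sum _ hfin, smul_sum,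
    ← sum_fiberwise_of_maps_to (t := hfin.toFinset) (g := toSubgraph)
      fun f _ => hfin.mem_toFinset.2 ⟨f.isoToSubgraph.symm⟩]
  refine sum_congr rfl fun B' hB' => ?_
  obtain ⟨e⟩ := hfin.mem_toFinset.1 hB'
  rw [sum_congr rfl fun f hf => congrArg F (mem_filter.1 hf).2, sum_const,
    ← natCard_toSubgraphFiber e, Nat.card_eq_fintype_card, Fintype.card_subtype]

theorem sum_coe_le_sum [Fintype (Copy A B)] [Fintype (α → β)] {M : Type*} [AddCommMonoid M]
    [PartialOrder M] [IsOrderedAddMonoid M] {F : (α → β) → M}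
    (hF : ∀ g, 0 ≤ F g) : ∑ f : Copy A B, F f ≤ ∑ g : α → β, F g :=
  (sum_map univ ⟨_, DFunLike.coe_injective⟩ F).symm.trans_le (sum_le_univ_sum_of_nonneg hF)

end SimpleGraph.Copy

/-- Copies of `H` in the complete graph on `V` are the subgraphs of `⊤ : SimpleGraph V`
isomorphic to `H`; `Aut H` is the group of graph automorphisms of `H`.  The codegree
function is extended to `Sym2 V` via `Sym2.lift`. -/
theorem stmt_8 {W V : Type*} [Fintype W] [Fintype V] [DecidableEq V]
    (H : SimpleGraph W) [DecidableRel H.Adj] (G : SimpleGraph V) [DecidableRel G.Adj]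
    (m k : ℕ) (hm : H.edgeFinset.card = m) (hδ : 2 ≤ k * H.minDegree) :
    ∑ᶠ H' ∈ {H' : (⊤ : SimpleGraph V).Subgraph | Nonempty (H'.coe ≃g H)},
        ∏ᶠ e ∈ H'.edgeSet,
          Sym2.lift ⟨fun x y => ((G.neighborFinset x ∩ G.neighborFinset y).card : ℝ) ^ k,
            fun x y => by simp [Finset.inter_comm]⟩ e ≤
      (2 * G.edgeFinset.card : ℝ) ^ (k * m) / Nat.card (H ≃g H) := by
  classical
  have : Finite (H ≃g H) := Finite.of_injective _ RelIso.coe_fn_injective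
  rw [le_div_iff₀ (Nat.cast_pos.2 Nat.card_pos), mul_comm, ← nsmul_eq_mul,
    ← SimpleGraph.Copy.sum_toSubgraph]
  simp_rw [SimpleGraph.Copy.finprod_mem_edgeSet_toSubgraph]
  refine (SimpleGraph.Copy.sum_coe_le_sum (A := H) (B := ⊤)
    fun g => prod_nonneg fun e _ => ?_).trans (hm ▸ G.sum_prod_codegree_pow_le H k hδ)
  induction e using Sym2.ind
  simp only [Sym2.map_mk, Sym2.lift_mk]
  positivity
end

section
/- Let X be a finite set and μ a probability mass on the 2-element subsets of X, with μ̄(x) = ∑_{y≠x} μ({x,y}). Then ∑ over ordered triples (x,y,z) of distinct elements of X of μ̄(x)·μ({x,y})·μ({y,z})·μ̄(z) is at most 8/27. -/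
/-!
Reversing the path `x - y - z` and using `2 ab ≤ a² + b²`, the sum is at most
`∑ μ̄(x)² μ(xy) μ(yz)`. Summing over `z` leaves `μ̄(y) - μ(xy)`, and
`μ̄(x) + μ̄(y) - μ(xy) ≤ 1` because the left side is the mass of the edges meeting `{x, y}`.
Hence the sum is at most `∑ₓ μ̄(x)³ (1 - μ̄(x)) ≤ (4/27) ∑ₓ μ̄(x) ≤ 8/27`, using
`t² (1 - t) ≤ 4/27` for `t ≥ 0` and the handshake bound `∑ₓ μ̄(x) ≤ 2`.
-/

open Finset

theorem pow_three_mul_one_sub_le {t : ℝ} (ht : 0 ≤ t) : t ^ 3 * (1 - t) ≤ 4 / 27 * t := by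
  nlinarith [mul_nonneg ht (mul_nonneg (sq_nonneg (3 * t - 2)) (by linarith : 0 ≤ 3 * t + 1))]

theorem Finset.sum_mul_mul_le_sum_sq_mul {ι : Type*} (s : Finset ι) {σ : ι → ι}
    (hσ : Function.Involutive σ) (hs : ∀ i ∈ s, σ i ∈ s) (a w : ι → ℝ)
    (hw : ∀ i ∈ s, 0 ≤ w i) (hwσ : ∀ i ∈ s, w (σ i) = w i) :
    ∑ i ∈ s, a i * a (σ i) * w i ≤ ∑ i ∈ s, a i ^ 2 * w i := by
  have hswap : ∑ i ∈ s, a (σ i) ^ 2 * w i = ∑ i ∈ s, a i ^ 2 * w i :=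
    sum_nbij' σ σ hs hs (fun i _ => hσ i) (fun i _ => hσ i)
      fun i hi => by rw [hwσ i hi]
  have hamgm : ∑ i ∈ s, 2 * (a i * a (σ i) * w i)
      ≤ ∑ i ∈ s, (a i ^ 2 * w i + a (σ i) ^ 2 * w i) :=
    sum_le_sum fun i hi => by nlinarith [mul_nonneg (sq_nonneg (a i - a (σ i))) (hw i hi)]
  rw [← mul_sum, sum_add_distrib, hswap] at hamgm
  linarith

section

variable {X : Type*} [Fintype X] [DecidableEq X]

variable (X) in
def distinctTriples : Finset (X × X × X) :=
  univ.filter fun t => t.1 ≠ t.2.1 ∧ t.1 ≠ t.2.2 ∧ t.2.1 ≠ t.2.2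

theorem mem_distinctTriples {t : X × X × X} :
    t ∈ distinctTriples X ↔ t.1 ≠ t.2.1 ∧ t.1 ≠ t.2.2 ∧ t.2.1 ≠ t.2.2 := by
  simp [distinctTriples]

theorem sum_distinctTriples {M : Type*} [AddCommMonoid M] (f : X × X × X → M) :
    ∑ t ∈ distinctTriples X, f t = ∑ x, ∑ y ∈ univ \ {x}, ∑ z ∈ univ \ {x, y}, f (x, y, z) := by
  simp only [distinctTriples, sum_filter, Fintype.sum_prod_type, ite_and, sum_ite_irrel,
    sum_const_zero]
  refine sum_congr rfl fun x _ => ?_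
  rw [← sum_filter]
  refine sum_congr (by ext; simp [eq_comm]) fun y _ => ?_
  rw [← sum_filter, ← sum_filter, filter_filter]
  exact sum_congr (by ext; simp [eq_comm]) fun z _ => rfl

omit [Fintype X] in
theorem card_filter_mk_eq_le_two (s : Finset (X × X)) (e : Sym2 X) :
    #{p ∈ s | s(p.1, p.2) = e} ≤ 2 := by
  induction e using Sym2.ind with
  | _ a b =>
    calc #{p ∈ s | s(p.1, p.2) = s(a, b)} ≤ #({(a, b), (b, a)} : Finset (X × X)) :=
          card_le_card fun p hp => by
            obtain ⟨p1, p2⟩ := p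
            simp only [mem_filter, Sym2.eq_iff] at hp
            simp only [mem_insert, mem_singleton, Prod.mk.injEq]
            tauto
      _ ≤ 2 := card_le_two

theorem sum_mk_le_two_mul_sum (s : Finset (X × X)) {μ : Sym2 X → ℝ} (hμ : ∀ e, 0 ≤ μ e) :
    ∑ p ∈ s, μ s(p.1, p.2) ≤ 2 * ∑ e, μ e := by
  rw [sum_comp μ (fun p : X × X => s(p.1, p.2)), mul_sum]
  calc ∑ e ∈ s.image (fun p : X × X => s(p.1, p.2)), #{p ∈ s | s(p.1, p.2) = e} • μ e
      ≤ ∑ e ∈ s.image (fun p : X × X => s(p.1, p.2)), 2 * μ e := sum_le_sum fun e _ => by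
        rw [nsmul_eq_mul]
        exact mul_le_mul_of_nonneg_right (by exact_mod_cast card_filter_mk_eq_le_two s e) (hμ e)
    _ ≤ ∑ e, 2 * μ e := sum_le_univ_sum_of_nonneg fun e => by linarith [hμ e]

def weightedDegree (μ : Sym2 X → ℝ) (x : X) : ℝ := ∑ y ∈ univ \ {x}, μ s(x, y)

variable {μ : Sym2 X → ℝ}

theorem weightedDegree_nonneg (hμ : ∀ e, 0 ≤ μ e) (x : X) : 0 ≤ weightedDegree μ x :=
  sum_nonneg fun _ _ => hμ _

theorem weightedDegree_eq_sum_image (μ : Sym2 X → ℝ) (x : X) :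
    weightedDegree μ x = ∑ e ∈ (univ \ {x}).image (fun y => s(x, y)), μ e :=
  (sum_image fun _ _ _ _ => Sym2.congr_right.mp).symm

theorem image_sdiff_inter_image_sdiff {x y : X} (hxy : x ≠ y) :
    (univ \ {x}).image (fun z => s(x, z)) ∩ (univ \ {y}).image (fun z => s(y, z)) = {s(x, y)} := by
  ext e
  simp only [mem_inter, mem_image, mem_sdiff, mem_univ, mem_singleton, true_and]
  constructor
  · rintro ⟨⟨u, -, rfl⟩, ⟨v, hv, hvu⟩⟩
    rcases Sym2.eq_iff.mp hvu with ⟨hyx, -⟩ | ⟨rfl, -⟩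
    · exact absurd hyx.symm hxy
    · rfl
  · rintro rfl
    exact ⟨⟨y, hxy.symm, rfl⟩, ⟨x, hxy, Sym2.eq_swap⟩⟩

theorem weightedDegree_add_weightedDegree_le (hμ : ∀ e, 0 ≤ μ e) {x y : X} (hxy : x ≠ y) :
    weightedDegree μ x + weightedDegree μ y ≤ ∑ e, μ e + μ s(x, y) := by
  rw [weightedDegree_eq_sum_image, weightedDegree_eq_sum_image, ← sum_union_inter,
    image_sdiff_inter_image_sdiff hxy, sum_singleton]
  exact add_le_add_left (sum_le_univ_sum_of_nonneg hμ) _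

theorem sum_sdiff_pair_eq_weightedDegree_sub (μ : Sym2 X → ℝ) {x y : X} (hxy : x ≠ y) :
    ∑ z ∈ univ \ {x, y}, μ s(y, z) = weightedDegree μ y - μ s(x, y) := by
  have hpair : univ \ {x, y} = (univ \ {y}).erase x := by
    ext z; simp
  rw [hpair, sum_erase_eq_sub (by simpa using hxy), Sym2.eq_swap]
  rfl

theorem sum_weightedDegree_le (hμ : ∀ e, 0 ≤ μ e) : ∑ x, weightedDegree μ x ≤ 2 * ∑ e, μ e :=
  calc ∑ x, weightedDegree μ x ≤ ∑ x, ∑ y, μ s(x, y) :=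
        sum_le_sum fun _ _ => sum_le_univ_sum_of_nonneg fun _ => hμ _
    _ = ∑ p : X × X, μ s(p.1, p.2) := (Fintype.sum_prod_type fun p : X × X => μ s(p.1, p.2)).symm
    _ ≤ 2 * ∑ e, μ e := sum_mk_le_two_mul_sum univ hμ

theorem sum_sq_mul_paths_le (hμ : ∀ e, 0 ≤ μ e) :
    ∑ x, ∑ y ∈ univ \ {x}, ∑ z ∈ univ \ {x, y},
        weightedDegree μ x ^ 2 * (μ s(x, y) * μ s(y, z))
      ≤ ∑ x, weightedDegree μ x ^ 3 * (∑ e, μ e - weightedDegree μ x) := by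
  refine sum_le_sum fun x _ => ?_
  calc ∑ y ∈ univ \ {x}, ∑ z ∈ univ \ {x, y}, weightedDegree μ x ^ 2 * (μ s(x, y) * μ s(y, z))
      = ∑ y ∈ univ \ {x},
          weightedDegree μ x ^ 2 * μ s(x, y) * (weightedDegree μ y - μ s(x, y)) :=
        sum_congr rfl fun y hy => by
          rw [← sum_sdiff_pair_eq_weightedDegree_sub μ (Ne.symm (by simpa using hy)), mul_sum]
          exact sum_congr rfl fun _ _ => by ring
    _ ≤ ∑ y ∈ univ \ {x}, weightedDegree μ x ^ 2 * μ s(x, y) * (∑ e, μ e - weightedDegree μ x) :=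
        sum_le_sum fun y hy => by
          have := weightedDegree_add_weightedDegree_le hμ (Ne.symm (by simpa using hy))
          exact mul_le_mul_of_nonneg_left (by linarith) (mul_nonneg (sq_nonneg _) (hμ _))
    _ = weightedDegree μ x ^ 3 * (∑ e, μ e - weightedDegree μ x) := by
        rw [← sum_mul, ← mul_sum, ← weightedDegree]
        ring

end

theorem stmt_12_general {X : Type*} [Fintype X] [DecidableEq X] (μ : Sym2 X → ℝ)
    (hnonneg : ∀ e, 0 ≤ μ e)
    (htotal : ∑ e : Sym2 X, μ e = 1)
    (μbar : X → ℝ) (hμbar : ∀ x, μbar x = ∑ y ∈ Finset.univ \ {x}, μ s(x, y)) :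
    ∑ t ∈ Finset.univ.filter
        (fun t : X × X × X => t.1 ≠ t.2.1 ∧ t.1 ≠ t.2.2 ∧ t.2.1 ≠ t.2.2),
      μbar t.1 * μ s(t.1, t.2.1) * μ s(t.2.1, t.2.2) * μbar t.2.2 ≤ 8 / 27 := by
  obtain rfl : μbar = weightedDegree μ := funext hμbar
  set d := weightedDegree μ
  have hreverse : Function.Involutive fun t : X × X × X => (t.2.2, t.2.1, t.1) := fun _ => rfl
  calc ∑ t ∈ distinctTriples X, d t.1 * μ s(t.1, t.2.1) * μ s(t.2.1, t.2.2) * d t.2.2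
      = ∑ t ∈ distinctTriples X, d t.1 * d t.2.2 * (μ s(t.1, t.2.1) * μ s(t.2.1, t.2.2)) :=
        sum_congr rfl fun _ _ => by ring
    _ ≤ ∑ t ∈ distinctTriples X, d t.1 ^ 2 * (μ s(t.1, t.2.1) * μ s(t.2.1, t.2.2)) :=
        sum_mul_mul_le_sum_sq_mul _ hreverse
          (fun t ht => by rw [mem_distinctTriples] at ht ⊢; tauto) (fun t => d t.1) _
          (fun _ _ => mul_nonneg (hnonneg _) (hnonneg _))
          (fun _ _ => by simp only [Sym2.eq_swap, mul_comm])
    _ = ∑ x, ∑ y ∈ univ \ {x}, ∑ z ∈ univ \ {x, y}, d x ^ 2 * (μ s(x, y) * μ s(y, z)) :=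
        sum_distinctTriples _
    _ ≤ ∑ x, d x ^ 3 * (1 - d x) := htotal ▸ sum_sq_mul_paths_le hnonneg
    _ ≤ ∑ x, 4 / 27 * d x :=
        sum_le_sum fun x _ => pow_three_mul_one_sub_le (weightedDegree_nonneg hnonneg x)
    _ ≤ 8 / 27 := by
        rw [← mul_sum]
        linarith [sum_weightedDegree_le hnonneg]

theorem stmt_12 {X : Type*} [Fintype X] [DecidableEq X] (μ : Sym2 X → ℝ)
    (hnonneg : ∀ e, 0 ≤ μ e) (hdiag : ∀ x, μ s(x, x) = 0)
    (htotal : ∑ e : Sym2 X, μ e = 1)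
    (μbar : X → ℝ) (hμbar : ∀ x, μbar x = ∑ y ∈ Finset.univ \ {x}, μ s(x, y)) :
    ∑ t ∈ Finset.univ.filter
        (fun t : X × X × X => t.1 ≠ t.2.1 ∧ t.1 ≠ t.2.2 ∧ t.2.1 ≠ t.2.2),
      μbar t.1 * μ s(t.1, t.2.1) * μ s(t.2.1, t.2.2) * μbar t.2.2 ≤ 8 / 27 :=
  stmt_12_general μ hnonneg htotal μbar hμbar
end

section
/- Let X be a finite set, μ a probability mass on the 2-element subsets of X, H a graph on m ≥ 1 edges with no isolated vertices, and k a positive integer. Then ∑ over copies H' of H with V(H') ⊆ X of (∏_{e ∈ E(H')} μ(e))^k is at most (k!)^m / (km)!. -/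
/-!
Let `F s` be the exponent vector equal to `k` on a set `s` of `m` edges and `0` elsewhere. In the
multinomial expansion of `1 = (∑ e, μ e) ^ (k * m)` the term indexed by `F s` is
`(k * m)! / k! ^ m * (∏ e ∈ s, μ e) ^ k`, and all terms are nonnegative. Since `H` has no isolated
vertices, a copy of `H` is determined by its edge set, so distinct copies index distinct terms and
their contributions sum to at most `1`.
-/

open Finset

section Multinomial

open Nat

variable {α : Type*} [DecidableEq α]

lemma ite_mem_injective {k : ℕ} (hk : k ≠ 0) :
    Function.Injective (fun (s : Finset α) (a : α) ↦ if a ∈ s then k else 0) := by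
  intro s t hst
  ext a
  have := congrFun hst a
  by_cases ha : a ∈ s <;> by_cases hb : a ∈ t <;> simp_all

variable [Fintype α]

lemma multinomial_ite_mem_mul_factorial_pow (s : Finset α) (k : ℕ) :
    Nat.multinomial univ (fun a ↦ if a ∈ s then k else 0) * k ! ^ #s = (k * #s)! := by
  have h := Nat.multinomial_spec (univ : Finset α) (fun a ↦ if a ∈ s then k else 0)
  simp only [apply_ite Nat.factorial, Nat.factorial_zero, prod_ite_mem, univ_inter, prod_const,
    sum_ite_mem, sum_const, smul_eq_mul] at h
  rw [mul_comm k, ← h, mul_comm]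

lemma mem_piAntidiag_ite_mem (s : Finset α) (k : ℕ) :
    (fun a ↦ if a ∈ s then k else 0) ∈ piAntidiag univ (k * #s) := by
  simp [mem_piAntidiag, sum_ite_mem, mul_comm]

theorem factorial_mul_sum_prod_pow_le {μ : α → ℝ} (hμ : ∀ a, 0 ≤ μ a) {k m : ℕ} (hk : k ≠ 0)
    {𝒜 : Finset (Finset α)} (h𝒜 : ∀ s ∈ 𝒜, #s = m) :
    ((k * m)! : ℝ) * ∑ s ∈ 𝒜, (∏ a ∈ s, μ a) ^ k ≤ (k ! : ℝ) ^ m * (∑ a, μ a) ^ (k * m) := by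
  set F : Finset α → α → ℕ := fun s a ↦ if a ∈ s then k else 0
  have hterm : ∀ s ∈ 𝒜, ((k * m)! : ℝ) * (∏ a ∈ s, μ a) ^ k =
      (k ! : ℝ) ^ m * (Nat.multinomial univ (F s) * ∏ a, μ a ^ F s a) := by
    intro s hs
    have hmult := multinomial_ite_mem_mul_factorial_pow s k
    rw [h𝒜 s hs] at hmult
    have hprod : ∏ a, μ a ^ F s a = (∏ a ∈ s, μ a) ^ k := by
      simp only [F, pow_ite, pow_zero, prod_ite_mem, univ_inter, prod_pow]
    rw [hprod, ← hmult]
    push_cast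
    ring
  rw [mul_sum, sum_congr rfl hterm, ← mul_sum, sum_pow_eq_sum_piAntidiag]
  gcongr
  rw [← sum_image (g := F) (f := fun f ↦ (Nat.multinomial univ f : ℝ) * ∏ a, μ a ^ f a)
    fun s _ t _ h ↦ ite_mem_injective hk h]
  refine sum_le_sum_of_subset_of_nonneg ?_ fun f _ _ ↦ by
    have := prod_nonneg fun a (_ : a ∈ univ) ↦ pow_nonneg (hμ a) (f a)
    positivity
  rintro _ hf
  obtain ⟨s, hs, rfl⟩ := mem_image.1 hf
  exact h𝒜 s hs ▸ mem_piAntidiag_ite_mem s k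

end Multinomial

namespace SimpleGraph.Subgraph

variable {V W : Type*} {G : SimpleGraph V} {H : SimpleGraph W}

lemma natCard_edgeSet_eq_of_iso {G' : G.Subgraph} (φ : G'.coe ≃g H) :
    Nat.card G'.edgeSet = Nat.card H.edgeSet := by
  rw [← image_coe_edgeSet_coe,
    Nat.card_image_of_injective (Sym2.map.injective Subtype.val_injective)]
  exact Nat.card_congr φ.mapEdgeSet

lemma exists_adj_of_iso {G' : G.Subgraph} (φ : G'.coe ≃g H) (hH : ∀ w, ∃ w', H.Adj w w')
    {v : V} (hv : v ∈ G'.verts) : ∃ w, G'.Adj v w := by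
  obtain ⟨w', hw'⟩ := hH (φ ⟨v, hv⟩)
  exact ⟨φ.symm w', by simpa using φ.symm.map_rel_iff.2 hw'⟩

lemma verts_eq_setOf_exists_adj {G' : G.Subgraph} (h : ∀ v ∈ G'.verts, ∃ w, G'.Adj v w) :
    G'.verts = {v | ∃ w, G'.Adj v w} :=
  Set.ext fun _ ↦ ⟨h _, fun ⟨_, hw⟩ ↦ G'.edge_vert hw⟩

lemma eq_of_edgeSet_eq {A B : G.Subgraph} (hA : ∀ v ∈ A.verts, ∃ w, A.Adj v w)
    (hB : ∀ v ∈ B.verts, ∃ w, B.Adj v w) (h : A.edgeSet = B.edgeSet) : A = B := by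
  have hAdj : A.Adj = B.Adj := by
    ext v w
    rw [← Subgraph.mem_edgeSet, ← Subgraph.mem_edgeSet, h]
  refine Subgraph.ext ?_ hAdj
  rw [verts_eq_setOf_exists_adj hA, verts_eq_setOf_exists_adj hB, hAdj]

end SimpleGraph.Subgraph

open SimpleGraph

theorem stmt_14_general {W X : Type*} [Fintype W] [Fintype X]
    (H : SimpleGraph W) [DecidableRel H.Adj] (m k : ℕ) (hm : H.edgeFinset.card = m)
    (hk : 0 < k) (hiso : ∀ w, 0 < H.degree w)
    (μ : Sym2 X → ℝ) (hnonneg : ∀ e, 0 ≤ μ e)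
    (htotal : ∑ e : Sym2 X, μ e = 1) :
    ∑ᶠ H' ∈ {H' : (⊤ : SimpleGraph X).Subgraph | Nonempty (H'.coe ≃g H)},
        (∏ᶠ e ∈ H'.edgeSet, μ e) ^ k ≤
      ((Nat.factorial k : ℝ)) ^ m / (Nat.factorial (k * m) : ℝ) := by
  classical
  set copies := {H' : (⊤ : SimpleGraph X).Subgraph | Nonempty (H'.coe ≃g H)}
  have hcard : ∀ H' ∈ copies.toFinset, #H'.edgeSet.toFinset = m := by
    intro H' hH'
    obtain ⟨φ⟩ := Set.mem_toFinset.1 hH'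
    rw [Set.toFinset_card, ← Nat.card_eq_fintype_card, Subgraph.natCard_edgeSet_eq_of_iso φ,
      Nat.card_eq_fintype_card, card_edgeSet, hm]
  have hinj : Set.InjOn (fun H' : (⊤ : SimpleGraph X).Subgraph ↦ H'.edgeSet.toFinset)
      copies.toFinset := by
    have hH : ∀ w, ∃ w', H.Adj w w' := fun w ↦ (H.degree_pos_iff_exists_adj w).1 (hiso w)
    intro A hA B hB hAB
    obtain ⟨φA⟩ := Set.mem_toFinset.1 hA
    obtain ⟨φB⟩ := Set.mem_toFinset.1 hB
    exact Subgraph.eq_of_edgeSet_eq (fun _ ↦ Subgraph.exists_adj_of_iso φA hH)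
      (fun _ ↦ Subgraph.exists_adj_of_iso φB hH) (Set.toFinset_inj.1 hAB)
  have hbound := factorial_mul_sum_prod_pow_le hnonneg hk.ne'
    (𝒜 := copies.toFinset.image fun H' ↦ H'.edgeSet.toFinset) (by simpa using hcard)
  rw [sum_image hinj, htotal, one_pow, mul_one] at hbound
  rw [finsum_mem_eq_toFinset_sum, le_div_iff₀ (by positivity), mul_comm]
  simpa only [finprod_mem_eq_toFinset_prod] using hbound

/-- `μ` is a probability mass on the 2-element subsets of `X`, encoded as a symmetric
function on `Sym2 X` vanishing on diagonal elements; copies of `H` with vertices in `X`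
are subgraphs of the complete graph `⊤ : SimpleGraph X` isomorphic to `H`. -/
theorem stmt_14 {W X : Type*} [Fintype W] [Fintype X]
    (H : SimpleGraph W) [DecidableRel H.Adj] (m k : ℕ) (hm : H.edgeFinset.card = m)
    (hm1 : 1 ≤ m) (hk : 0 < k) (hiso : ∀ w, 0 < H.degree w)
    (μ : Sym2 X → ℝ) (hnonneg : ∀ e, 0 ≤ μ e) (hdiag : ∀ x, μ s(x, x) = 0)
    (htotal : ∑ e : Sym2 X, μ e = 1) :
    ∑ᶠ H' ∈ {H' : (⊤ : SimpleGraph X).Subgraph | Nonempty (H'.coe ≃g H)},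
        (∏ᶠ e ∈ H'.edgeSet, μ e) ^ k ≤
      ((Nat.factorial k : ℝ)) ^ m / (Nat.factorial (k * m) : ℝ) :=
  stmt_14_general H m k hm hk hiso μ hnonneg htotal
end
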